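/- Let A be a unital C*-algebra, let n be a positive natural number, let P be an n×n complex matrix that is positive definite, and let Q be an n×n matrix with entries in A that is positive (0 ≤ Q in the C*-algebra of n×n matrices over A). Assume moreover that for some index k the diagonal entry Q k k is invertible in A. Then the element Σ_{i,j} P i j • Q i j is a positive and invertible element of A. -/

import Mathlib

/-!
Write `P = Bᴴ B` and `Q = Rᴴ R`. Then `∑ i j, P i j • Q i j` is the sum over the pairs of rows
`(l, m)` of `star x * x` with `x = ∑ j, B l j • R m j`, hence positive whenever `P` is positive
semidefinite. A positive definite `P` dominates `ε • 1` for some `ε > 0`; splitting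
`P = ε • 1 + (P - ε • 1)` gives `∑ i j, P i j • Q i j ≥ ε • trace Q ≥ ε • Q k k`, and an element
of a C⋆-algebra dominating a strictly positive one is invertible.
-/

open scoped ComplexOrder Matrix

namespace Matrix

variable {ι κ μ A : Type*} [Fintype ι]

theorem PosSemidef.diag_le_trace [Ring A] [PartialOrder A] [StarRing A] [AddLeftMono A]
    {Q : Matrix ι ι A} (hQ : Q.PosSemidef) (k : ι) : Q k k ≤ Q.trace :=
  Finset.single_le_sum (f := Q.diag) (fun _ _ ↦ hQ.diag_nonneg) (Finset.mem_univ k)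

theorem sum_smul_entries_smul_one_add [DecidableEq ι] [AddCommMonoid A] [Module ℂ A]
    (c : ℂ) (P : Matrix ι ι ℂ) (Q : Matrix ι ι A) :
    ∑ i, ∑ j, (c • 1 + P) i j • Q i j = c • Q.trace + ∑ i, ∑ j, P i j • Q i j := by
  simp [add_smul, Finset.sum_add_distrib, one_apply, ite_smul, trace, Finset.smul_sum]

theorem sum_smul_conjTranspose_mul_self_eq_sum_star_mul_self [Fintype κ] [Fintype μ]
    [Ring A] [StarRing A] [Algebra ℂ A] [StarModule ℂ A]
    (B : Matrix κ ι ℂ) (R : Matrix μ ι A) :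
    ∑ i, ∑ j, (Bᴴ * B) i j • (Rᴴ * R) i j
      = ∑ l, ∑ m, star (∑ j, B l j • R m j) * ∑ j, B l j • R m j := by
  simp_rw [star_sum, star_smul, Finset.sum_mul_sum, smul_mul_smul_comm, mul_apply,
    conjTranspose_apply, Finset.sum_smul, Finset.smul_sum, ← Fintype.sum_prod_type']
  exact Fintype.sum_equiv ((Equiv.prodAssoc ..).symm.trans <|
    (Equiv.prodComm ..).trans <| Equiv.prodAssoc ..) _ _ fun _ ↦ rfl

theorem PosSemidef.sum_smul_conjTranspose_mul_self_nonneg [Fintype μ] [CStarAlgebra A]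
    [PartialOrder A] [StarOrderedRing A] {P : Matrix ι ι ℂ} (hP : P.PosSemidef)
    (R : Matrix μ ι A) : 0 ≤ ∑ i, ∑ j, P i j • (Rᴴ * R) i j := by
  classical
  open scoped MatrixOrder in
  obtain ⟨B, rfl⟩ := CStarAlgebra.nonneg_iff_eq_star_mul_self.mp hP.nonneg
  rw [star_eq_conjTranspose, sum_smul_conjTranspose_mul_self_eq_sum_star_mul_self]
  exact Finset.sum_nonneg fun l _ ↦ Finset.sum_nonneg fun m _ ↦ star_mul_self_nonneg _

theorem PosDef.exists_pos_posSemidef_sub_smul_one [DecidableEq ι] [Nonempty ι]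
    {P : Matrix ι ι ℂ} (hP : P.PosDef) : ∃ ε : ℝ, 0 < ε ∧ (P - (ε : ℂ) • 1).PosSemidef := by
  open scoped MatrixOrder in
  obtain ⟨ε, hε, hle⟩ := (CFC.exists_pos_algebraMap_le_iff hP.isHermitian).2
    fun _ hx ↦ hP.isStrictlyPositive.spectrum_pos hx
  refine ⟨ε, hε, ?_⟩
  rwa [Algebra.algebraMap_eq_smul_one, ← Complex.coe_smul, le_iff] at hle

end Matrix

theorem sum_smul_entries_pos_isUnit_of_posDef_general
    {A : Type*} [CStarAlgebra A] [PartialOrder A] [StarOrderedRing A]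
    (n : ℕ)
    (P : Matrix (Fin n) (Fin n) ℂ) (hP : P.PosDef)
    (Q : Matrix (Fin n) (Fin n) A)
    (hQ : ∃ R : Matrix (Fin n) (Fin n) A, Q = Rᴴ * R)
    (k : Fin n) (hk : IsUnit (Q k k)) :
    0 ≤ ∑ i, ∑ j, P i j • Q i j ∧ IsUnit (∑ i, ∑ j, P i j • Q i j) := by
  obtain ⟨R, rfl⟩ := hQ
  have : Nonempty (Fin n) := ⟨k⟩
  obtain ⟨ε, hε, hPε⟩ := hP.exists_pos_posSemidef_sub_smul_one
  have hQpos := Matrix.posSemidef_conjTranspose_mul_self R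
  have hle : ε • (Rᴴ * R) k k ≤ ∑ i, ∑ j, P i j • (Rᴴ * R) i j :=
    calc ε • (Rᴴ * R) k k
        ≤ ε • (Rᴴ * R).trace := smul_le_smul_of_nonneg_left (hQpos.diag_le_trace k) hε.le
      _ ≤ (ε : ℂ) • (Rᴴ * R).trace + ∑ i, ∑ j, (P - (ε : ℂ) • 1) i j • (Rᴴ * R) i j := by
        rw [Complex.coe_smul]
        exact le_add_of_nonneg_right (hPε.sum_smul_conjTranspose_mul_self_nonneg R)
      _ = ∑ i, ∑ j, P i j • (Rᴴ * R) i j := by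
        rw [← Matrix.sum_smul_entries_smul_one_add, add_sub_cancel]
  have hεk : IsStrictlyPositive (ε • (Rᴴ * R) k k) := by
    refine IsUnit.isStrictlyPositive ?_ (smul_nonneg hε.le hQpos.diag_nonneg)
    rw [Algebra.smul_def]
    exact (hε.ne'.isUnit.map (algebraMap ℝ A)).mul hk
  exact ⟨hP.posSemidef.sum_smul_conjTranspose_mul_self_nonneg R,
    CStarAlgebra.isUnit_of_le _ hle hεk⟩

/-- Let `A` be a unital C*-algebra, `n` a positive natural number,
`P` an `n × n` complex positive definite matrix, and `Q` an `n × n` matrix over `A`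
that is positive as an element of the C*-algebra of `n × n` matrices over `A`
(equivalently, `Q = Rᴴ * R` for some matrix `R` over `A`), such that some diagonal
entry `Q k k` is invertible in `A`.  Then `∑ i j, P i j • Q i j` is a positive and
invertible element of `A`. -/
theorem sum_smul_entries_pos_isUnit_of_posDef
    {A : Type*} [CStarAlgebra A] [PartialOrder A] [StarOrderedRing A]
    (n : ℕ) (hn : 0 < n)
    (P : Matrix (Fin n) (Fin n) ℂ) (hP : P.PosDef)
    (Q : Matrix (Fin n) (Fin n) A)
    (hQ : ∃ R : Matrix (Fin n) (Fin n) A, Q = Rᴴ * R)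
    (k : Fin n) (hk : IsUnit (Q k k)) :
    0 ≤ ∑ i, ∑ j, P i j • Q i j ∧ IsUnit (∑ i, ∑ j, P i j • Q i j) :=
  sum_smul_entries_pos_isUnit_of_posDef_general n P hP Q hQ k hk
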